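/- arXiv:1009.5290 — 2 statements merged into one kernel-verified Lean document; each statement's English description precedes it below -/
import Mathlib

section
/- (Theorem 1) For any finite directed graphs G_A = (V_A, E_A) and G_B = (V_B, E_B) and for each pair of nodes i ∈ V_A and j ∈ V_B, the limit x_{ij} = lim_{k→∞} x^k_{ij} of the neighbor matching iteration exists, and x_{ij} ∈ [0,1]. -/
open Finset Filter Topology

/-- A matching of finite sets `A` and `B`: a set of pairs, each with first
component in `A` and second in `B`, such that no element of either set occurs
in more than one pair. -/
def IsMatching {α β : Type*} (A : Finset α) (B : Finset β) (M : Finset (α × β)) : Prop :=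
  (∀ p ∈ M, p.1 ∈ A ∧ p.2 ∈ B) ∧
  (∀ p ∈ M, ∀ q ∈ M, p.1 = q.1 → p = q) ∧
  (∀ p ∈ M, ∀ q ∈ M, p.2 = q.2 → p = q)

open Classical in
/-- The optimal matching weight `W(A,B,w)`: the maximum over all matchings `M`
of `A` and `B` of the total weight `∑ (a,b) ∈ M, w a b` (the empty matching is allowed). -/
noncomputable def optWeight {α β : Type*} (A : Finset α) (B : Finset β)
    (w : α → β → ℝ) : ℝ :=
  ((A ×ˢ B).powerset.filter fun M => IsMatching A B M).sup'
    ⟨∅, by simp [IsMatching]⟩ (fun M => ∑ p ∈ M, w p.1 p.2)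

open Classical in
/-- The in-neighbors of node `i` in the directed graph with nodes `V` and edges `E`. -/
noncomputable def inNbrs {α : Type*} (V : Finset α) (E : Finset (α × α)) (i : α) : Finset α :=
  V.filter fun p => (p, i) ∈ E

open Classical in
/-- The out-neighbors of node `i` in the directed graph with nodes `V` and edges `E`. -/
noncomputable def outNbrs {α : Type*} (V : Finset α) (E : Finset (α × α)) (i : α) : Finset α :=
  V.filter fun q => (i, q) ∈ E

/-- In-similarity of `i ∈ V_A` and `j ∈ V_B` computed from the similarity matrix `x`:
`W(In(i), In(j), x) / max(id(i), id(j))` when `max(id(i), id(j)) > 0`, and `1` otherwise. -/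
noncomputable def sIn {α β : Type*} (VA : Finset α) (EA : Finset (α × α))
    (VB : Finset β) (EB : Finset (β × β)) (x : α → β → ℝ) (i : α) (j : β) : ℝ :=
  if max (inNbrs VA EA i).card (inNbrs VB EB j).card = 0 then 1
  else optWeight (inNbrs VA EA i) (inNbrs VB EB j) x /
    (max (inNbrs VA EA i).card (inNbrs VB EB j).card : ℝ)

/-- Out-similarity of `i ∈ V_A` and `j ∈ V_B` computed from the similarity matrix `x`:
`W(Out(i), Out(j), x) / max(od(i), od(j))` when `max(od(i), od(j)) > 0`, and `1` otherwise. -/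
noncomputable def sOut {α β : Type*} (VA : Finset α) (EA : Finset (α × α))
    (VB : Finset β) (EB : Finset (β × β)) (x : α → β → ℝ) (i : α) (j : β) : ℝ :=
  if max (outNbrs VA EA i).card (outNbrs VB EB j).card = 0 then 1
  else optWeight (outNbrs VA EA i) (outNbrs VB EB j) x /
    (max (outNbrs VA EA i).card (outNbrs VB EB j).card : ℝ)

/-- The neighbor matching update operator: `F(x)_{ij} = (s_in(i,j;x) + s_out(i,j;x)) / 2`. -/
noncomputable def nmUpdate {α β : Type*} (VA : Finset α) (EA : Finset (α × α))
    (VB : Finset β) (EB : Finset (β × β)) (x : α → β → ℝ) : α → β → ℝ :=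
  fun i j => (sIn VA EA VB EB x i j + sOut VA EA VB EB x i j) / 2

/-- The neighbor matching iteration: `x⁰_{ij} = 1` and `x^{k+1} = F(x^k)`. -/
noncomputable def nmIter {α β : Type*} (VA : Finset α) (EA : Finset (α × α))
    (VB : Finset β) (EB : Finset (β × β)) : ℕ → α → β → ℝ
  | 0 => fun _ _ => 1
  | k + 1 => nmUpdate VA EA VB EB (nmIter VA EA VB EB k)

section Aux

variable {α β : Type*}

open Classical in
lemma empty_mem_matchings (A : Finset α) (B : Finset β) :
    (∅ : Finset (α × β)) ∈ (A ×ˢ B).powerset.filter fun M => IsMatching A B M := by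
  simp [IsMatching]

lemma optWeight_nonneg (A : Finset α) (B : Finset β) (w : α → β → ℝ) :
    0 ≤ optWeight A B w := by
  classical
  have h := Finset.le_sup' (f := fun M : Finset (α × β) => ∑ p ∈ M, w p.1 p.2)
    (empty_mem_matchings A B)
  simpa [optWeight] using h

lemma optWeight_le (A : Finset α) (B : Finset β) (w : α → β → ℝ)
    (h : ∀ a ∈ A, ∀ b ∈ B, w a b ≤ 1) :
    optWeight A B w ≤ (max A.card B.card : ℕ) := by
  classical
  apply Finset.sup'_le
  intro M hM
  simp only [Finset.mem_filter, Finset.mem_powerset] at hM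
  obtain ⟨_, hmem, hfst, _⟩ := hM
  have hcard : M.card ≤ A.card := by
    have himg : (M.image Prod.fst).card = M.card :=
      Finset.card_image_of_injOn fun p hp q hq hpq => hfst p hp q hq hpq
    rw [← himg]
    apply Finset.card_le_card
    intro a ha
    obtain ⟨p, hp, rfl⟩ := Finset.mem_image.mp ha
    exact (hmem p hp).1
  calc ∑ p ∈ M, w p.1 p.2 ≤ ∑ _p ∈ M, (1 : ℝ) :=
        Finset.sum_le_sum fun p hp => h p.1 (hmem p hp).1 p.2 (hmem p hp).2
    _ = (M.card : ℝ) := by simp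
    _ ≤ (A.card : ℝ) := by exact_mod_cast hcard
    _ ≤ ((max A.card B.card : ℕ) : ℝ) := by exact_mod_cast le_max_left _ _

lemma optWeight_mono (A : Finset α) (B : Finset β) {w w' : α → β → ℝ}
    (h : ∀ a ∈ A, ∀ b ∈ B, w a b ≤ w' a b) :
    optWeight A B w ≤ optWeight A B w' := by
  classical
  apply Finset.sup'_le
  intro M hM
  refine le_trans ?_ (Finset.le_sup'
    (f := fun M : Finset (α × β) => ∑ p ∈ M, w' p.1 p.2) hM)
  simp only [Finset.mem_filter, Finset.mem_powerset] at hM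
  exact Finset.sum_le_sum fun p hp => h p.1 (hM.2.1 p hp).1 p.2 (hM.2.1 p hp).2

lemma aux_mem (A : Finset α) (B : Finset β) {x : α → β → ℝ}
    (hx1 : ∀ a ∈ A, ∀ b ∈ B, x a b ≤ 1) :
    (if max A.card B.card = 0 then (1 : ℝ)
      else optWeight A B x / (max (A.card : ℝ) (B.card : ℝ))) ∈ Set.Icc (0 : ℝ) 1 := by
  split
  · exact ⟨zero_le_one, le_refl 1⟩
  · next h =>
    have hpos : (0 : ℝ) < max (A.card : ℝ) (B.card : ℝ) := by
      rw [← Nat.cast_max]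
      exact_mod_cast Nat.pos_of_ne_zero h
    constructor
    · exact div_nonneg (optWeight_nonneg A B x) hpos.le
    · rw [div_le_one hpos, ← Nat.cast_max]
      exact optWeight_le A B x hx1

lemma aux_mono (A : Finset α) (B : Finset β) {x x' : α → β → ℝ}
    (h : ∀ a ∈ A, ∀ b ∈ B, x a b ≤ x' a b) :
    (if max A.card B.card = 0 then (1 : ℝ)
      else optWeight A B x / (max (A.card : ℝ) (B.card : ℝ))) ≤
    (if max A.card B.card = 0 then (1 : ℝ)
      else optWeight A B x' / (max (A.card : ℝ) (B.card : ℝ))) := by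
  split
  · exact le_refl 1
  · next hne =>
    have hpos : (0 : ℝ) < max (A.card : ℝ) (B.card : ℝ) := by
      rw [← Nat.cast_max]
      exact_mod_cast Nat.pos_of_ne_zero hne
    gcongr
    exact optWeight_mono A B h

lemma sIn_mem (VA : Finset α) (EA : Finset (α × α)) (VB : Finset β)
    (EB : Finset (β × β)) {x : α → β → ℝ} (hx1 : ∀ a b, x a b ≤ 1) (i : α) (j : β) :
    sIn VA EA VB EB x i j ∈ Set.Icc (0 : ℝ) 1 := by
  unfold sIn; exact aux_mem _ _ (fun a _ b _ => hx1 a b)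

lemma sOut_mem (VA : Finset α) (EA : Finset (α × α)) (VB : Finset β)
    (EB : Finset (β × β)) {x : α → β → ℝ} (hx1 : ∀ a b, x a b ≤ 1) (i : α) (j : β) :
    sOut VA EA VB EB x i j ∈ Set.Icc (0 : ℝ) 1 := by
  unfold sOut; exact aux_mem _ _ (fun a _ b _ => hx1 a b)

lemma sIn_mono (VA : Finset α) (EA : Finset (α × α)) (VB : Finset β)
    (EB : Finset (β × β)) {x x' : α → β → ℝ} (h : ∀ a b, x a b ≤ x' a b) (i : α) (j : β) :
    sIn VA EA VB EB x i j ≤ sIn VA EA VB EB x' i j := by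
  unfold sIn; exact aux_mono _ _ (fun a _ b _ => h a b)

lemma sOut_mono (VA : Finset α) (EA : Finset (α × α)) (VB : Finset β)
    (EB : Finset (β × β)) {x x' : α → β → ℝ} (h : ∀ a b, x a b ≤ x' a b) (i : α) (j : β) :
    sOut VA EA VB EB x i j ≤ sOut VA EA VB EB x' i j := by
  unfold sOut; exact aux_mono _ _ (fun a _ b _ => h a b)

lemma nmIter_mem (VA : Finset α) (EA : Finset (α × α)) (VB : Finset β)
    (EB : Finset (β × β)) : ∀ k (i : α) (j : β),
    nmIter VA EA VB EB k i j ∈ Set.Icc (0 : ℝ) 1 := by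
  intro k
  induction k with
  | zero => intro i j; exact ⟨zero_le_one, le_refl 1⟩
  | succ k ih =>
    intro i j
    have h1 := sIn_mem VA EA VB EB (fun a b => (ih a b).2) i j
    have h2 := sOut_mem VA EA VB EB (fun a b => (ih a b).2) i j
    constructor
    · show (0 : ℝ) ≤ (_ + _) / 2
      have := h1.1; have := h2.1; linarith
    · show (_ + _) / 2 ≤ (1 : ℝ)
      have := h1.2; have := h2.2; linarith

lemma nmIter_antitone_step (VA : Finset α) (EA : Finset (α × α)) (VB : Finset β)
    (EB : Finset (β × β)) : ∀ k (i : α) (j : β),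
    nmIter VA EA VB EB (k + 1) i j ≤ nmIter VA EA VB EB k i j := by
  intro k
  induction k with
  | zero => intro i j; exact (nmIter_mem VA EA VB EB 1 i j).2
  | succ k ih =>
    intro i j
    have h1 := sIn_mono VA EA VB EB (fun a b => ih a b) i j
    have h2 := sOut_mono VA EA VB EB (fun a b => ih a b) i j
    show (_ + _) / 2 ≤ (_ + _) / 2
    linarith

end Aux

/-- (Theorem 1) For any finite directed graphs `G_A` and `G_B` and each pair of
nodes `i ∈ V_A`, `j ∈ V_B`, the limit `x_{ij} = lim_{k→∞} x^k_{ij}` of the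
neighbor matching iteration exists and lies in `[0,1]`. -/
theorem nmIter_converges {α β : Type*} (VA : Finset α) (EA : Finset (α × α))
    (VB : Finset β) (EB : Finset (β × β))
    (hEA : EA ⊆ VA ×ˢ VA) (hEB : EB ⊆ VB ×ˢ VB) :
    ∀ i ∈ VA, ∀ j ∈ VB, ∃ x : ℝ, x ∈ Set.Icc (0 : ℝ) 1 ∧
      Tendsto (fun k => nmIter VA EA VB EB k i j) atTop (𝓝 x) := by
  intro i _ j _
  set f : ℕ → ℝ := fun k => nmIter VA EA VB EB k i j with hf
  have hanti : Antitone f :=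
    antitone_nat_of_succ_le fun k => nmIter_antitone_step VA EA VB EB k i j
  have hbdd : BddBelow (Set.range f) := by
    refine ⟨0, ?_⟩
    rintro y ⟨k, rfl⟩
    exact (nmIter_mem VA EA VB EB k i j).1
  refine ⟨⨅ k, f k, ⟨?_, ?_⟩, tendsto_atTop_ciInf hanti hbdd⟩
  · exact le_ciInf fun k => (nmIter_mem VA EA VB EB k i j).1
  · exact (ciInf_le hbdd 0).trans (nmIter_mem VA EA VB EB 0 i j).2
end

section
/- Let G_A = (V_A, E_A) and G_B = (V_B, E_B) be finite directed graphs whose nodes are assigned colors by maps c_A : V_A → C and c_B : V_B → C, and consider the colored neighbor matching iteration, in which x^k_{ij} is forced to be 0 whenever c_A(i) ≠ c_B(j). If f : V_A → V_B is a color-preserving isomorphism (i.e., an isomorphism with c_B(f(i)) = c_A(i) for all i ∈ V_A), then for every k ≥ 0 and every node i ∈ V_A it holds that x^k_{i f(i)} = 1, and consequently the limit satisfies x_{i f(i)} = 1. -/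
open Finset Filter Topology

open Classical in
/-- The colored neighbor matching iteration for graphs with node colorings
`cA : V_A → C` and `cB : V_B → C`: the score `x^k_{ij}` is forced to be `0`
whenever `cA i ≠ cB j`, and otherwise follows the neighbor matching update. -/
noncomputable def cnmIter {α β γ : Type*} (VA : Finset α) (EA : Finset (α × α))
    (VB : Finset β) (EB : Finset (β × β)) (cA : α → γ) (cB : β → γ) :
    ℕ → α → β → ℝ
  | 0 => fun i j => if cA i = cB j then 1 else 0
  | k + 1 => fun i j =>
      if cA i = cB j then nmUpdate VA EA VB EB (cnmIter VA EA VB EB cA cB k) i j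
      else 0

lemma matching_card_le {α β : Type*} {A : Finset α} {B : Finset β} {M : Finset (α × β)}
    (h : IsMatching A B M) : M.card ≤ A.card := by
  classical
  have hinj : Set.InjOn Prod.fst ↑M := fun p hp q hq hpq =>
    h.2.1 p (by simpa using hp) q (by simpa using hq) hpq
  calc M.card = (M.image Prod.fst).card := (Finset.card_image_of_injOn hinj).symm
    _ ≤ A.card := Finset.card_le_card (by
        intro a ha
        obtain ⟨p, hp, rfl⟩ := Finset.mem_image.mp ha
        exact (h.1 p hp).1)

lemma optWeight_le_max {α β : Type*} (A : Finset α) (B : Finset β) (w : α → β → ℝ)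
    (hw : ∀ a b, w a b ≤ 1) :
    optWeight A B w ≤ max A.card B.card := by
  classical
  apply Finset.sup'_le
  intro M hM
  simp only [Finset.mem_filter, Finset.mem_powerset] at hM
  calc ∑ p ∈ M, w p.1 p.2 ≤ ∑ p ∈ M, (1:ℝ) :=
        Finset.sum_le_sum fun p _ => hw p.1 p.2
    _ = M.card := by simp
    _ ≤ A.card := by exact_mod_cast matching_card_le hM.2
    _ ≤ max A.card B.card := by exact_mod_cast le_max_left A.card B.card

lemma le_optWeight {α β : Type*} {A : Finset α} {B : Finset β} (w : α → β → ℝ)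
    {M : Finset (α × β)} (hM : IsMatching A B M) :
    ∑ p ∈ M, w p.1 p.2 ≤ optWeight A B w := by
  classical
  refine Finset.le_sup' (fun N : Finset (α × β) => ∑ p ∈ N, w p.1 p.2) ?_
  simp only [Finset.mem_filter, Finset.mem_powerset]
  exact ⟨fun p hp => Finset.mem_product.mpr (hM.1 p hp), hM⟩

open Classical in
lemma diag_isMatching {α β : Type*} (A : Finset α) (f : α → β)
    (hinj : Set.InjOn f ↑A) :
    IsMatching A (A.image f) (A.image fun a => (a, f a)) := by
  classical
  refine ⟨?_, ?_, ?_⟩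
  · intro p hp
    obtain ⟨a, ha, rfl⟩ := Finset.mem_image.mp hp
    exact ⟨ha, Finset.mem_image_of_mem f ha⟩
  · intro p hp q hq h
    obtain ⟨a, ha, rfl⟩ := Finset.mem_image.mp hp
    obtain ⟨b, hb, rfl⟩ := Finset.mem_image.mp hq
    simp_all
  · intro p hp q hq h
    obtain ⟨a, ha, rfl⟩ := Finset.mem_image.mp hp
    obtain ⟨b, hb, rfl⟩ := Finset.mem_image.mp hq
    simp only at h
    have : a = b := hinj ha hb h
    subst this; rfl

open Classical in
lemma card_le_optWeight {α β : Type*} (A : Finset α) (f : α → β) (w : α → β → ℝ)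
    (hinj : Set.InjOn f ↑A) (hw : ∀ a ∈ A, w a (f a) = 1) :
    (A.card : ℝ) ≤ optWeight A (A.image f) w := by
  classical
  have h := le_optWeight w (diag_isMatching A f hinj)
  have hsum : ∑ p ∈ A.image (fun a => (a, f a)), w p.1 p.2 = A.card := by
    rw [Finset.sum_image (by intro a ha b hb hab; simpa using congrArg Prod.fst hab)]
    rw [Finset.sum_congr rfl fun a ha => hw a ha]
    simp
  linarith

open Classical in
lemma inNbrs_image {α β : Type*} (VA : Finset α) (EA : Finset (α × α))
    (VB : Finset β) (EB : Finset (β × β))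
    (f : α → β) (hbij : Set.BijOn f ↑VA ↑VB)
    (hiso : ∀ i ∈ VA, ∀ j ∈ VA, ((i, j) ∈ EA ↔ (f i, f j) ∈ EB))
    {i : α} (hi : i ∈ VA) :
    inNbrs VB EB (f i) = (inNbrs VA EA i).image f := by
  classical
  ext q
  simp only [inNbrs, Finset.mem_image, Finset.mem_filter]
  constructor
  · rintro ⟨hq, hqe⟩
    obtain ⟨p, hp, rfl⟩ := hbij.surjOn hq
    exact ⟨p, ⟨hp, (hiso p hp i hi).mpr hqe⟩, rfl⟩
  · rintro ⟨p, ⟨hp, hpe⟩, rfl⟩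
    exact ⟨hbij.mapsTo hp, (hiso p hp i hi).mp hpe⟩

open Classical in
lemma outNbrs_image {α β : Type*} (VA : Finset α) (EA : Finset (α × α))
    (VB : Finset β) (EB : Finset (β × β))
    (f : α → β) (hbij : Set.BijOn f ↑VA ↑VB)
    (hiso : ∀ i ∈ VA, ∀ j ∈ VA, ((i, j) ∈ EA ↔ (f i, f j) ∈ EB))
    {i : α} (hi : i ∈ VA) :
    outNbrs VB EB (f i) = (outNbrs VA EA i).image f := by
  classical
  ext q
  simp only [outNbrs, Finset.mem_image, Finset.mem_filter]
  constructor
  · rintro ⟨hq, hqe⟩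
    obtain ⟨p, hp, rfl⟩ := hbij.surjOn hq
    exact ⟨p, ⟨hp, (hiso i hi p hp).mpr hqe⟩, rfl⟩
  · rintro ⟨p, ⟨hp, hpe⟩, rfl⟩
    exact ⟨hbij.mapsTo hp, (hiso i hi p hp).mp hpe⟩

lemma sIn_le_one {α β : Type*} (VA : Finset α) (EA : Finset (α × α))
    (VB : Finset β) (EB : Finset (β × β)) (x : α → β → ℝ)
    (hx : ∀ a b, x a b ≤ 1) (i : α) (j : β) :
    sIn VA EA VB EB x i j ≤ 1 := by
  rw [sIn]
  split
  · exact le_refl 1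
  · rename_i h
    have hpos : (0:ℝ) < (max (inNbrs VA EA i).card (inNbrs VB EB j).card : ℕ) := by
      exact_mod_cast Nat.pos_of_ne_zero h
    rw [div_le_one (by push_cast at hpos ⊢; exact hpos)]
    have := optWeight_le_max (inNbrs VA EA i) (inNbrs VB EB j) x hx
    push_cast at this ⊢
    linarith

lemma sOut_le_one {α β : Type*} (VA : Finset α) (EA : Finset (α × α))
    (VB : Finset β) (EB : Finset (β × β)) (x : α → β → ℝ)
    (hx : ∀ a b, x a b ≤ 1) (i : α) (j : β) :
    sOut VA EA VB EB x i j ≤ 1 := by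
  rw [sOut]
  split
  · exact le_refl 1
  · rename_i h
    have hpos : (0:ℝ) < (max (outNbrs VA EA i).card (outNbrs VB EB j).card : ℕ) := by
      exact_mod_cast Nat.pos_of_ne_zero h
    rw [div_le_one (by push_cast at hpos ⊢; exact hpos)]
    have := optWeight_le_max (outNbrs VA EA i) (outNbrs VB EB j) x hx
    push_cast at this ⊢
    linarith

open Classical in
lemma ratio_eq_one {α β : Type*} (A : Finset α) (f : α → β) (x : α → β → ℝ)
    (hinj : Set.InjOn f ↑A) (hx : ∀ a b, x a b ≤ 1) (hxd : ∀ a ∈ A, x a (f a) = 1)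
    (h : max A.card (A.image f).card ≠ 0) :
    optWeight A (A.image f) x / (max A.card (A.image f).card : ℝ) = 1 := by
  have hcard : (A.image f).card = A.card := Finset.card_image_of_injOn hinj
  have hmax : max A.card (A.image f).card = A.card := by rw [hcard, max_self]
  have hpos : 0 < A.card := by omega
  have hle := optWeight_le_max A (A.image f) x hx
  have hge := card_le_optWeight A f x hinj hxd
  have heq : optWeight A (A.image f) x = A.card := by
    refine le_antisymm ?_ hge
    rw [hmax] at hle
    exact_mod_cast hle
  rw [heq, hcard, max_self, div_self (by exact_mod_cast hpos.ne')]

lemma cnmIter_le_one {α β γ : Type*} (VA : Finset α) (EA : Finset (α × α))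
    (VB : Finset β) (EB : Finset (β × β)) (cA : α → γ) (cB : β → γ) :
    ∀ k i j, cnmIter VA EA VB EB cA cB k i j ≤ 1 := by
  classical
  intro k
  induction k with
  | zero => intro i j; simp only [cnmIter]; split <;> norm_num
  | succ k ih =>
    intro i j
    simp only [cnmIter]
    split
    · rw [nmUpdate]
      have h1 := sIn_le_one VA EA VB EB _ ih i j
      have h2 := sOut_le_one VA EA VB EB _ ih i j
      linarith
    · norm_num

/-- If `f : V_A → V_B` is a color-preserving isomorphism of the colored directed
graphs `G_A` and `G_B`, then every iterate of the colored neighbor matching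
iteration satisfies `x^k_{i f(i)} = 1` for all `i ∈ V_A`, and consequently the
limit satisfies `x_{i f(i)} = 1`. -/
theorem cnmIter_isomorphism {α β γ : Type*} (VA : Finset α) (EA : Finset (α × α))
    (VB : Finset β) (EB : Finset (β × β)) (cA : α → γ) (cB : β → γ)
    (hEA : EA ⊆ VA ×ˢ VA) (hEB : EB ⊆ VB ×ˢ VB)
    (f : α → β) (hbij : Set.BijOn f ↑VA ↑VB)
    (hiso : ∀ i ∈ VA, ∀ j ∈ VA, ((i, j) ∈ EA ↔ (f i, f j) ∈ EB))
    (hcol : ∀ i ∈ VA, cB (f i) = cA i) :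
    (∀ k : ℕ, ∀ i ∈ VA, cnmIter VA EA VB EB cA cB k i (f i) = 1) ∧
    (∀ i ∈ VA,
      Tendsto (fun k => cnmIter VA EA VB EB cA cB k i (f i)) atTop (𝓝 1)) := by
  classical
  have key : ∀ k : ℕ, ∀ i ∈ VA, cnmIter VA EA VB EB cA cB k i (f i) = 1 := by
    intro k
    induction k with
    | zero => intro i hi; simp [cnmIter, hcol i hi]
    | succ k ih =>
      intro i hi
      simp only [cnmIter]
      rw [if_pos (hcol i hi).symm]
      set x := cnmIter VA EA VB EB cA cB k with hx
      have hxle : ∀ a b, x a b ≤ 1 := cnmIter_le_one VA EA VB EB cA cB k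
      have hinImg := inNbrs_image VA EA VB EB f hbij hiso hi
      have houtImg := outNbrs_image VA EA VB EB f hbij hiso hi
      have hinjIn : Set.InjOn f ↑(inNbrs VA EA i) := by
        apply hbij.injOn.mono
        intro p hp
        simp only [inNbrs, Finset.coe_filter, Set.mem_setOf_eq] at hp
        exact hp.1
      have hinjOut : Set.InjOn f ↑(outNbrs VA EA i) := by
        apply hbij.injOn.mono
        intro p hp
        simp only [outNbrs, Finset.coe_filter, Set.mem_setOf_eq] at hp
        exact hp.1
      have hxdIn : ∀ a ∈ inNbrs VA EA i, x a (f a) = 1 := by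
        intro a ha
        apply ih
        simp only [inNbrs, Finset.mem_filter] at ha
        exact ha.1
      have hxdOut : ∀ a ∈ outNbrs VA EA i, x a (f a) = 1 := by
        intro a ha
        apply ih
        simp only [outNbrs, Finset.mem_filter] at ha
        exact ha.1
      have hsIn : sIn VA EA VB EB x i (f i) = 1 := by
        rw [sIn, hinImg]
        split
        · rfl
        · exact ratio_eq_one _ f x hinjIn hxle hxdIn (by assumption)
      have hsOut : sOut VA EA VB EB x i (f i) = 1 := by
        rw [sOut, houtImg]
        split
        · rfl
        · exact ratio_eq_one _ f x hinjOut hxle hxdOut (by assumption)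
      rw [nmUpdate, hsIn, hsOut]
      norm_num
  refine ⟨key, fun i hi => ?_⟩
  have : (fun k => cnmIter VA EA VB EB cA cB k i (f i)) = fun _ => (1:ℝ) := by
    funext k; exact key k i hi
  rw [this]
  exact tendsto_const_nhds
end
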